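/- arXiv:1305.2337 — 5 statements merged into one kernel-verified Lean document; each statement's English description precedes it below -/
import Mathlib

section
/- Let γ be a unit-speed generic curve in ℝ^{m+1} with focal curve C_γ = γ + c₁n₁ + ⋯ + c_m n_m whose focal curvatures satisfy the scalar Frenet equations. Then for every s ∈ ℝ, the point q = C_γ(s) satisfies the caustic conditions ∂F/∂θ(q,s) = 0 and ∂²F/∂θ²(q,s) = 0, where F(q,θ) = ½‖q − γ(θ)‖². -/
open Finset

noncomputable section

/-- A unit-speed generic curve in `ℝ^{m+1}`, given by a smooth curve `γ`
together with its Frenet frame (`frame 0 = t`, `frame i = nᵢ` for `1 ≤ i ≤ m`)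
and positive smooth Frenet curvatures `κ i`, `1 ≤ i ≤ m`, satisfying the
Frenet equations. -/
structure GenericCurve (m : ℕ) where
  γ : ℝ → EuclideanSpace ℝ (Fin (m + 1))
  frame : ℕ → ℝ → EuclideanSpace ℝ (Fin (m + 1))
  κ : ℕ → ℝ → ℝ
  smooth_γ : ContDiff ℝ (⊤ : ℕ∞) γ
  smooth_frame : ∀ i ≤ m, ContDiff ℝ (⊤ : ℕ∞) (frame i)
  smooth_κ : ∀ i, 1 ≤ i → i ≤ m → ContDiff ℝ (⊤ : ℕ∞) (κ i)
  κ_pos : ∀ i, 1 ≤ i → i ≤ m → ∀ s, 0 < κ i s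
  orthonormal : ∀ s : ℝ, ∀ i ≤ m, ∀ j ≤ m,
    (inner ℝ (frame i s) (frame j s) : ℝ) = if i = j then 1 else 0
  unit_speed : ∀ s, deriv γ s = frame 0 s
  frenet_zero : ∀ s, deriv (frame 0) s = κ 1 s • frame 1 s
  frenet : ∀ i, 1 ≤ i → i ≤ m - 1 → ∀ s,
    deriv (frame i) s = -κ i s • frame (i - 1) s + κ (i + 1) s • frame (i + 1) s
  frenet_last : ∀ s, deriv (frame m) s = -κ m s • frame (m - 1) s

/-- The focal curve `C_γ = γ + c₁n₁ + ⋯ + c_m n_m` of a generic curve `γ`,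
with focal curvatures `c i`, `1 ≤ i ≤ m`. -/
def focalCurve (m : ℕ) (G : GenericCurve m) (c : ℕ → ℝ → ℝ) :
    ℝ → EuclideanSpace ℝ (Fin (m + 1)) :=
  fun s => G.γ s + ∑ i ∈ Finset.Icc 1 m, c i s • G.frame i s

/-- The scalar Frenet equations for the focal curvatures:
`1 = κ₁c₁`, `c₁' = κ₂c₂`, and `cᵢ' = −κᵢcᵢ₋₁ + κᵢ₊₁cᵢ₊₁` for `2 ≤ i ≤ m−1`. -/
def ScalarFrenet (m : ℕ) (G : GenericCurve m) (c : ℕ → ℝ → ℝ) : Prop :=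
  (∀ s, 1 = G.κ 1 s * c 1 s) ∧
  (∀ s, deriv (c 1) s = G.κ 2 s * c 2 s) ∧
  (∀ i, 2 ≤ i → i ≤ m - 1 → ∀ s,
    deriv (c i) s = -G.κ i s * c (i - 1) s + G.κ (i + 1) s * c (i + 1) s)

/-- A Frenet frame with positive smooth Frenet curvatures along a (not
necessarily unit-speed) curve `C` in `ℝ^{m+1}`: `N 0 = T`, `N α = N_α` for
`1 ≤ α ≤ m`, with Frenet curvatures `K i`, `1 ≤ i ≤ m`. -/
structure FrenetFrameAlong (m : ℕ) (C : ℝ → EuclideanSpace ℝ (Fin (m + 1))) where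
  N : ℕ → ℝ → EuclideanSpace ℝ (Fin (m + 1))
  K : ℕ → ℝ → ℝ
  smooth_N : ∀ i ≤ m, ContDiff ℝ (⊤ : ℕ∞) (N i)
  smooth_K : ∀ i, 1 ≤ i → i ≤ m → ContDiff ℝ (⊤ : ℕ∞) (K i)
  K_pos : ∀ i, 1 ≤ i → i ≤ m → ∀ s, 0 < K i s
  orthonormal : ∀ s : ℝ, ∀ i ≤ m, ∀ j ≤ m,
    (inner ℝ (N i s) (N j s) : ℝ) = if i = j then 1 else 0
  tangent : ∀ s, deriv C s = ‖deriv C s‖ • N 0 s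
  frenet_zero : ∀ s, deriv (N 0) s = (‖deriv C s‖ * K 1 s) • N 1 s
  frenet : ∀ i, 1 ≤ i → i ≤ m - 1 → ∀ s,
    deriv (N i) s = ‖deriv C s‖ • (-K i s • N (i - 1) s + K (i + 1) s • N (i + 1) s)
  frenet_last : ∀ s, deriv (N m) s = -(‖deriv C s‖ * K m s) • N (m - 1) s


private theorem deriv_half_norm_sq {m : ℕ} (γ : ℝ → EuclideanSpace ℝ (Fin (m+1)))
    (q : EuclideanSpace ℝ (Fin (m+1))) (hγ : Differentiable ℝ γ) (θ : ℝ) :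
    deriv (fun θ => (1 / 2 : ℝ) * ‖q - γ θ‖ ^ 2) θ
      = -(inner ℝ (q - γ θ) (deriv γ θ) : ℝ) := by
  have hf : HasDerivAt (fun θ => q - γ θ) (-(deriv γ θ)) θ :=
    ((hγ θ).hasDerivAt).const_sub q
  have hinner : HasDerivAt (fun θ => (inner ℝ (q - γ θ) (q - γ θ) : ℝ))
      ((inner ℝ (q - γ θ) (-(deriv γ θ)) : ℝ) + inner ℝ (-(deriv γ θ)) (q - γ θ)) θ :=
    hf.inner ℝ hf
  have h2 : HasDerivAt (fun θ => (1 / 2 : ℝ) * ‖q - γ θ‖ ^ 2)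
      ((1/2:ℝ) * ((inner ℝ (q - γ θ) (-(deriv γ θ)) : ℝ)
        + inner ℝ (-(deriv γ θ)) (q - γ θ))) θ := by
    have := hinner.const_mul (1/2 : ℝ)
    simp only [← real_inner_self_eq_norm_sq]
    exact this
  rw [h2.deriv, inner_neg_right (𝕜 := ℝ), inner_neg_left (𝕜 := ℝ),
    real_inner_comm (deriv γ θ)]
  ring

/-- Every point `C_γ(s)` of the focal curve satisfies the caustic conditions
`F_q'(s) = 0` and `F_q''(s) = 0` with `q = C_γ(s)`. -/
theorem focalCurve_mem_caustic (m : ℕ) (hm : 1 ≤ m) (G : GenericCurve m)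
    (c : ℕ → ℝ → ℝ) (hc : ∀ i, 1 ≤ i → i ≤ m → ContDiff ℝ (⊤ : ℕ∞) (c i))
    (hsf : ScalarFrenet m G c) (s : ℝ) :
    deriv (fun θ => (1 / 2 : ℝ) * ‖focalCurve m G c s - G.γ θ‖ ^ 2) s = 0 ∧
    deriv (deriv (fun θ => (1 / 2 : ℝ) * ‖focalCurve m G c s - G.γ θ‖ ^ 2)) s = 0 := by
  obtain ⟨h1, h2, h3⟩ := hsf
  have hγ : Differentiable ℝ G.γ := G.smooth_γ.differentiable (by simp)
  set q := focalCurve m G c s with hqdef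
  have hd1 : ∀ θ, deriv (fun θ => (1 / 2 : ℝ) * ‖q - G.γ θ‖ ^ 2) θ
      = -(inner ℝ (q - G.γ θ) (G.frame 0 θ) : ℝ) := fun θ => by
    rw [deriv_half_norm_sq G.γ q hγ θ, G.unit_speed θ]
  have hqsub : q - G.γ s = ∑ i ∈ Finset.Icc 1 m, c i s • G.frame i s := by
    simp [hqdef, focalCurve]
  have hproj : ∀ j ≤ m, (inner ℝ (q - G.γ s) (G.frame j s) : ℝ)
      = if j ∈ Finset.Icc 1 m then c j s else 0 := by
    intro j hj
    rw [hqsub, sum_inner]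
    have : ∀ i ∈ Finset.Icc 1 m,
        (inner ℝ (c i s • G.frame i s) (G.frame j s) : ℝ)
          = if i = j then c i s else 0 := by
      intro i hi
      rw [real_inner_smul_left, G.orthonormal s i (Finset.mem_Icc.mp hi).2 j hj]
      simp [mul_ite]
    rw [Finset.sum_congr rfl this, Finset.sum_ite_eq' (Finset.Icc 1 m) j (fun i => c i s)]
  constructor
  · rw [hd1 s, hproj 0 (Nat.zero_le m)]
    simp
  · have hderivF : deriv (fun θ => (1 / 2 : ℝ) * ‖q - G.γ θ‖ ^ 2)
        = fun θ => -(inner ℝ (q - G.γ θ) (G.frame 0 θ) : ℝ) := funext hd1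
    rw [hderivF]
    have hf : HasDerivAt (fun θ => q - G.γ θ) (-(G.frame 0 s)) s := by
      have := ((hγ s).hasDerivAt).const_sub q
      rwa [G.unit_speed s] at this
    have hg : HasDerivAt (G.frame 0) (G.κ 1 s • G.frame 1 s) s := by
      have := ((G.smooth_frame 0 (Nat.zero_le m)).differentiable (by simp) s).hasDerivAt
      rwa [G.frenet_zero s] at this
    have hD : HasDerivAt (fun θ => -(inner ℝ (q - G.γ θ) (G.frame 0 θ) : ℝ))
        (-((inner ℝ (q - G.γ s) (G.κ 1 s • G.frame 1 s) : ℝ)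
          + inner ℝ (-(G.frame 0 s)) (G.frame 0 s))) s := (hf.inner ℝ hg).neg
    rw [hD.deriv]
    rw [real_inner_smul_right, inner_neg_left (𝕜 := ℝ),
      G.orthonormal s 0 (Nat.zero_le m) 0 (Nat.zero_le m), hproj 1 hm]
    have h1m : (1 : ℕ) ∈ Finset.Icc 1 m := Finset.mem_Icc.mpr ⟨le_refl 1, hm⟩
    rw [if_pos h1m]
    simp only [if_true]
    linarith [h1 s]


end
end

section
/- Let m be even and let γ be a unit-speed generic curve in ℝ^{m+1} with focal curve C_γ whose focal curvatures satisfy the scalar Frenet equations, and assume A := c_m' + c_{m−1}κ_m is everywhere positive. Let {T, N₁, …, N_m} be a Frenet frame of C_γ with positive Frenet curvatures. Then T = n_m, N_α = (−1)^α n_{m−α} for 1 ≤ α ≤ m−1 (in particular N₁ = −n_{m−1}, N₂ = n_{m−2}, N_{m−1} = −n₁), and N_m = t. -/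
open Finset

noncomputable section

private lemma aux_smul_unit {E : Type*} [NormedAddCommGroup E] [NormedSpace ℝ E]
    {a r : ℝ} {u v : E} (ha : 0 < a) (hu : ‖u‖ = 1) (hv : ‖v‖ = 1)
    (h : a • v = r • u) : a = |r| ∧ v = (r / a) • u := by
  have h1 : a = |r| := by
    have h2 := congrArg norm h
    rw [norm_smul, norm_smul, hu, hv, mul_one, mul_one, Real.norm_eq_abs, Real.norm_eq_abs,
      abs_of_pos ha] at h2
    exact h2
  refine ⟨h1, ?_⟩
  have h3 : v = a⁻¹ • (a • v) := by rw [smul_smul, inv_mul_cancel₀ ha.ne', one_smul]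
  rw [h3, h, smul_smul, inv_mul_eq_div]

/-- For `m` even and `A = c_m' + c_{m−1}κ_m > 0`, the Frenet frame of the
focal curve is `T = n_m`, `N_α = (−1)^α n_{m−α}`, `N_m = t`. -/
theorem frenetFrame_focalCurve_even (m : ℕ) (hm : 1 ≤ m) (hme : Even m)
    (G : GenericCurve m) (c : ℕ → ℝ → ℝ)
    (hc : ∀ i, 1 ≤ i → i ≤ m → ContDiff ℝ (⊤ : ℕ∞) (c i))
    (hsf : ScalarFrenet m G c)
    (hA : ∀ s, 0 < deriv (c m) s + c (m - 1) s * G.κ m s)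
    (F : FrenetFrameAlong m (focalCurve m G c)) :
    (∀ s, F.N 0 s = G.frame m s) ∧
    (∀ α, 1 ≤ α → α ≤ m - 1 → ∀ s,
      F.N α s = ((-1 : ℝ) ^ α) • G.frame (m - α) s) ∧
    (∀ s, F.N m s = G.frame 0 s) := by
  obtain ⟨hsf1, hsf2, hsf3⟩ := hsf
  obtain ⟨k, rfl⟩ : ∃ k, m = k + 2 := by
    rcases hme with ⟨p, hp⟩; exact ⟨p + p - 2, by omega⟩
  rw [show k + 2 - 1 = k + 1 from rfl] at hA hsf3
  -- basic facts
  have hdf : ∀ i, i ≤ k + 2 → Differentiable ℝ (G.frame i) :=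
    fun i hi => (G.smooth_frame i hi).differentiable (by simp)
  have hdc : ∀ i, 1 ≤ i → i ≤ k + 2 → Differentiable ℝ (c i) :=
    fun i h1 h2 => (hc i h1 h2).differentiable (by simp)
  have hnf : ∀ (s : ℝ) (i : ℕ), i ≤ k + 2 → ‖G.frame i s‖ = 1 := by
    intro s i hi
    have h := G.orthonormal s i hi i hi
    rw [if_pos rfl, real_inner_self_eq_norm_mul_norm] at h
    rcases mul_self_eq_one_iff.1 h with h' | h'
    · exact h'
    · nlinarith [norm_nonneg (G.frame i s)]
  have hnN : ∀ (s : ℝ) (i : ℕ), i ≤ k + 2 → ‖F.N i s‖ = 1 := by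
    intro s i hi
    have h := F.orthonormal s i hi i hi
    rw [if_pos rfl, real_inner_self_eq_norm_mul_norm] at h
    rcases mul_self_eq_one_iff.1 h with h' | h'
    · exact h'
    · nlinarith [norm_nonneg (F.N i s)]
  obtain ⟨A, hAdef⟩ : ∃ A : ℝ → ℝ,
      A = fun s => deriv (c (k + 2)) s + c (k + 1) s * G.κ (k + 2) s := ⟨_, rfl⟩
  have hApos : ∀ s, 0 < A s := by intro s; rw [hAdef]; exact hA s
  -- the derivative of the focal curve
  have hC : ∀ s, deriv (focalCurve (k + 2) G c) s = A s • G.frame (k + 2) s := by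
    intro s
    have hdiff : ∀ i ∈ Icc 1 (k + 2), DifferentiableAt ℝ (fun t => c i t • G.frame i t) s := by
      intro i hi
      rw [Finset.mem_Icc] at hi
      exact (hdc i hi.1 hi.2 s).smul (hdf i hi.2 s)
    have h1 : deriv (focalCurve (k + 2) G c) s
        = G.frame 0 s + ∑ i ∈ Icc 1 (k + 2),
            (c i s • deriv (G.frame i) s + deriv (c i) s • G.frame i s) := by
      have hfc : focalCurve (k + 2) G c
          = fun t => G.γ t + ∑ i ∈ Icc 1 (k + 2), c i t • G.frame i t := rfl
      rw [hfc, deriv_fun_add ((G.smooth_γ.differentiable (by simp)) s) (DifferentiableAt.fun_sum hdiff),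
        G.unit_speed, deriv_fun_sum hdiff]
      congr 1
      refine Finset.sum_congr rfl fun i hi => ?_
      rw [Finset.mem_Icc] at hi
      exact deriv_fun_smul (hdc i hi.1 hi.2 s) (hdf i hi.2 s)
    set Gf : ℕ → EuclideanSpace ℝ (Fin (k + 2 + 1)) := fun i =>
      if i = 0 then G.frame 0 s
      else (G.κ (i + 1) s * c (i + 1) s) • G.frame i s
        + (G.κ (i + 1) s * c i s) • G.frame (i + 1) s with hGf
    have hstep : ∀ j, j < k + 1 →
        c (j + 1) s • deriv (G.frame (j + 1)) s + deriv (c (j + 1)) s • G.frame (j + 1) s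
          = Gf (j + 1) - Gf j := by
      intro j hj
      rcases Nat.eq_zero_or_pos j with rfl | hj1
      · rw [hsf2 s, G.frenet 1 le_rfl (by omega) s]
        simp only [hGf, if_neg (by omega : (1 : ℕ) ≠ 0), if_pos rfl]
        rw [show (1 : ℕ) - 1 = 0 from rfl]
        match_scalars <;> first
          | ring1
          | linear_combination hsf1 s
      · obtain ⟨j', rfl⟩ : ∃ j', j = j' + 1 := ⟨j - 1, by omega⟩
        rw [hsf3 (j' + 2) (by omega) (by omega) s, G.frenet (j' + 2) (by omega) (by omega) s]
        simp only [hGf, if_neg (by omega : j' + 2 ≠ 0), if_neg (by omega : j' + 1 ≠ 0)]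
        rw [show j' + 2 - 1 = j' + 1 from rfl]
        match_scalars <;> ring1
    have htel : ∑ i ∈ Icc 1 (k + 1),
        (c i s • deriv (G.frame i) s + deriv (c i) s • G.frame i s) = Gf (k + 1) - Gf 0 := by
      rw [show Icc 1 (k + 1) = Ico 1 (k + 2) from rfl, Finset.sum_Ico_eq_sum_range,
        show k + 2 - 1 = k + 1 from rfl]
      calc ∑ j ∈ range (k + 1),
            (c (1 + j) s • deriv (G.frame (1 + j)) s + deriv (c (1 + j)) s • G.frame (1 + j) s)
          = ∑ j ∈ range (k + 1), (Gf (j + 1) - Gf j) := by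
            refine Finset.sum_congr rfl fun j hj => ?_
            rw [Finset.mem_range] at hj
            rw [show 1 + j = j + 1 from by omega]
            exact hstep j hj
        _ = Gf (k + 1) - Gf 0 := Finset.sum_range_sub Gf (k + 1)
    rw [h1, Finset.sum_Icc_succ_top (by omega : 1 ≤ k + 2), htel, G.frenet_last s, hAdef]
    simp only [hGf, if_neg (by omega : k + 1 ≠ 0), if_pos rfl,
      show k + 2 - 1 = k + 1 from rfl, show k + 1 + 1 = k + 2 from rfl]
    match_scalars <;> ring1
  have hnC : ∀ s, ‖deriv (focalCurve (k + 2) G c) s‖ = A s := by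
    intro s
    rw [hC s, norm_smul, hnf s (k + 2) le_rfl, mul_one, Real.norm_eq_abs,
      abs_of_pos (hApos s)]
  have hN0 : ∀ s, F.N 0 s = G.frame (k + 2) s := by
    intro s
    have h := F.tangent s
    rw [hnC s, hC s] at h
    exact (smul_right_injective _ (hApos s).ne' h).symm
  -- the main induction
  have key : ∀ α, α ≤ k + 1 →
      (∀ s, F.N α s = ((-1 : ℝ) ^ α) • G.frame (k + 2 - α) s) ∧
      (1 ≤ α → ∀ s, A s * F.K α s = G.κ (k + 3 - α) s) := by
    intro α
    induction α using Nat.strong_induction_on with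
    | _ α ih =>
      match α with
      | 0 =>
        intro _
        exact ⟨fun s => by rw [pow_zero, one_smul, Nat.sub_zero, hN0 s], by omega⟩
      | 1 =>
        intro _
        have main : ∀ s, A s * F.K 1 s = G.κ (k + 2) s ∧
            F.N 1 s = ((-1 : ℝ) ^ 1) • G.frame (k + 1) s := by
          intro s
          have hκ := G.κ_pos (k + 2) (by omega) le_rfl s
          have hd : deriv (F.N 0) s = (-G.κ (k + 2) s) • G.frame (k + 1) s := by
            have hfun : F.N 0 = G.frame (k + 2) := funext hN0
            rw [hfun, G.frenet_last s, show k + 2 - 1 = k + 1 from rfl]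
          have hf := F.frenet_zero s
          rw [hnC s, hd] at hf
          obtain ⟨h1, h2⟩ := aux_smul_unit
            (mul_pos (hApos s) (F.K_pos 1 (by omega) (by omega) s))
            (hnf s (k + 1) (by omega)) (hnN s 1 (by omega)) hf.symm
          have habs : |(-G.κ (k + 2) s)| = G.κ (k + 2) s := by
            rw [abs_neg, abs_of_pos hκ]
          refine ⟨by rw [h1, habs], ?_⟩
          rw [h2, h1, habs, pow_one, neg_div, div_self hκ.ne']
        exact ⟨fun s => (main s).2, fun _ s => by
          rw [show k + 3 - 1 = k + 2 from rfl]; exact (main s).1⟩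
      | β + 2 =>
        intro hle
        obtain ⟨r, hrk⟩ : ∃ r, k = β + 1 + r := ⟨k - 1 - β, by omega⟩
        have e1 : k + 2 - (β + 2) = r + 1 := by omega
        have e2 : k + 2 - (β + 1) = r + 2 := by omega
        have e3 : k + 2 - β = r + 3 := by omega
        have e4 : k + 3 - (β + 1) = r + 3 := by omega
        have e5 : k + 3 - (β + 2) = r + 2 := by omega
        have ih1 := ih (β + 1) (by omega) (by omega)
        have ih0 := ih β (by omega) (by omega)
        rw [e2, e4] at ih1
        rw [e3] at ih0
        have main : ∀ s, A s * F.K (β + 2) s = G.κ (r + 2) s ∧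
            F.N (β + 2) s = ((-1 : ℝ) ^ (β + 2)) • G.frame (r + 1) s := by
          intro s
          have hκ := G.κ_pos (r + 2) (by omega) (by omega) s
          have hd : deriv (F.N (β + 1)) s
              = ((-1 : ℝ) ^ (β + 1)) •
                ((-G.κ (r + 2) s) • G.frame (r + 1) s + G.κ (r + 3) s • G.frame (r + 3) s) := by
            have hfun : F.N (β + 1) = fun t => ((-1 : ℝ) ^ (β + 1)) • G.frame (r + 2) t :=
              funext ih1.1
            rw [hfun, deriv_fun_const_smul _ (hdf (r + 2) (by omega) s),
              G.frenet (r + 2) (by omega) (by omega) s, show r + 2 - 1 = r + 1 from rfl]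
          have hf := F.frenet (β + 1) (by omega) (by omega) s
          rw [hnC s, hd, show β + 1 - 1 = β from rfl, ih0.1 s] at hf
          have hABK := ih1.2 (by omega) s
          have h3 : (A s * F.K (β + 2) s) • F.N (β + 2) s
              = ((-1 : ℝ) ^ (β + 1)) •
                  ((-G.κ (r + 2) s) • G.frame (r + 1) s + G.κ (r + 3) s • G.frame (r + 3) s)
                + (A s * F.K (β + 1) s) • (((-1 : ℝ) ^ β) • G.frame (r + 3) s) := by
            rw [hf]; module
          rw [hABK] at h3
          have hkey : (A s * F.K (β + 2) s) • F.N (β + 2) s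
              = (((-1 : ℝ) ^ (β + 2)) * G.κ (r + 2) s) • G.frame (r + 1) s := by
            rw [h3]; module
          obtain ⟨h1, h2⟩ := aux_smul_unit
            (mul_pos (hApos s) (F.K_pos (β + 2) (by omega) (by omega) s))
            (hnf s (r + 1) (by omega)) (hnN s (β + 2) (by omega)) hkey
          have habs : |((-1 : ℝ) ^ (β + 2)) * G.κ (r + 2) s| = G.κ (r + 2) s := by
            rw [abs_mul, abs_pow, abs_neg, abs_one, one_pow, one_mul, abs_of_pos hκ]
          refine ⟨by rw [h1, habs], ?_⟩
          rw [h2, h1, habs, mul_div_assoc, div_self hκ.ne', mul_one]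
        exact ⟨fun s => by rw [e1]; exact (main s).2, fun _ s => by
          rw [e5]; exact (main s).1⟩
  -- the last vector
  have hNm : ∀ s, F.N (k + 2) s = G.frame 0 s := by
    intro s
    have ih1 := key (k + 1) le_rfl
    have ih0 := key k (by omega)
    rw [show k + 2 - (k + 1) = 1 from by omega, show k + 3 - (k + 1) = 2 from by omega] at ih1
    rw [show k + 2 - k = 2 from by omega] at ih0
    have hκ := G.κ_pos 1 le_rfl (by omega) s
    have hd : deriv (F.N (k + 1)) s
        = ((-1 : ℝ) ^ (k + 1)) •
          ((-G.κ 1 s) • G.frame 0 s + G.κ 2 s • G.frame 2 s) := by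
      have hfun : F.N (k + 1) = fun t => ((-1 : ℝ) ^ (k + 1)) • G.frame 1 t := funext ih1.1
      rw [hfun, deriv_fun_const_smul _ (hdf 1 (by omega) s),
        G.frenet 1 le_rfl (by omega) s, show (1 : ℕ) - 1 = 0 from rfl]
    have hf := F.frenet (k + 1) (by omega) (by omega) s
    rw [hnC s, hd, show k + 1 - 1 = k from rfl, ih0.1 s] at hf
    have hABK := ih1.2 (by omega) s
    have h3 : (A s * F.K (k + 2) s) • F.N (k + 2) s
        = ((-1 : ℝ) ^ (k + 1)) •
            ((-G.κ 1 s) • G.frame 0 s + G.κ 2 s • G.frame 2 s)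
          + (A s * F.K (k + 1) s) • (((-1 : ℝ) ^ k) • G.frame 2 s) := by
      rw [hf]; module
    rw [hABK] at h3
    have hkey : (A s * F.K (k + 2) s) • F.N (k + 2) s
        = (((-1 : ℝ) ^ (k + 2)) * G.κ 1 s) • G.frame 0 s := by
      rw [h3]; module
    have heven : ((-1 : ℝ) ^ (k + 2)) = 1 := hme.neg_one_pow
    rw [heven, one_mul] at hkey
    obtain ⟨h1, h2⟩ := aux_smul_unit
      (mul_pos (hApos s) (F.K_pos (k + 2) (by omega) le_rfl s))
      (hnf s 0 (by omega)) (hnN s (k + 2) le_rfl) hkey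
    have habs : |G.κ 1 s| = G.κ 1 s := abs_of_pos hκ
    rw [h2, h1, habs, div_self hκ.ne', one_smul]
  refine ⟨hN0, ?_, hNm⟩
  intro α h1 h2 s
  rw [show k + 2 - 1 = k + 1 from rfl] at h2
  exact (key α h2).1 s

end
end

section
/- Let γ be a unit-speed generic curve in ℝ^{m+1} with focal curve C_γ whose focal curvatures satisfy the scalar Frenet equations, assume A := c_m' + c_{m−1}κ_m is nowhere zero, and let {T, N₁, …, N_m} be a Frenet frame of C_γ with positive Frenet curvatures. If γ is a 1-slant helix with fixed unit direction U (i.e. ⟨U, t(s)⟩ is constant and nonzero), then the focal representation C_γ is an (m+1)-slant helix in ℝ^{m+1}: ⟨U, N_m(s)⟩ is constant and nonzero. -/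
open Finset

noncomputable section

/-! ### Auxiliary lemmas -/


lemma aux_norm_one {E : Type*} [NormedAddCommGroup E] [InnerProductSpace ℝ E] {v : E}
    (h : (inner ℝ v v : ℝ) = 1) : ‖v‖ = 1 := by
  have h2 := real_inner_self_eq_norm_mul_norm v
  nlinarith [norm_nonneg v]

lemma GenericCurve.frame_norm {m : ℕ} (G : GenericCurve m) {i : ℕ} (hi : i ≤ m) (s : ℝ) :
    ‖G.frame i s‖ = 1 := by
  have h := G.orthonormal s i hi i hi
  rw [if_pos rfl] at h
  exact aux_norm_one h

lemma FrenetFrameAlong.N_norm {m : ℕ} {C : ℝ → EuclideanSpace ℝ (Fin (m + 1))}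
    (F : FrenetFrameAlong m C) {i : ℕ} (hi : i ≤ m) (s : ℝ) : ‖F.N i s‖ = 1 := by
  have h := F.orthonormal s i hi i hi
  rw [if_pos rfl] at h
  exact aux_norm_one h

lemma unit_vec_eq {E : Type*} [NormedAddCommGroup E] [NormedSpace ℝ E] {v w : E} {X a : ℝ}
    (hX : 0 < X) (hv : ‖v‖ = 1) (hw : ‖w‖ = 1) (h : X • v = a • w) :
    X = |a| ∧ v = (a / X) • w := by
  have hn : X = |a| := by
    have h2 := congrArg norm h
    rwa [norm_smul, norm_smul, hv, hw, mul_one, mul_one, Real.norm_eq_abs, Real.norm_eq_abs,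
      abs_of_pos hX] at h2
  refine ⟨hn, ?_⟩
  have h3 : v = X⁻¹ • (X • v) := by rw [smul_smul, inv_mul_cancel₀ hX.ne', one_smul]
  rw [h3, h, smul_smul, div_eq_inv_mul]

lemma sum_Icc_top {M : Type*} [AddCommMonoid M] {a b : ℕ} (h : a ≤ b + 1) (f : ℕ → M) :
    ∑ i ∈ Icc a (b + 1), f i = ∑ i ∈ Icc a b, f i + f (b + 1) := by
  rw [← Finset.insert_Icc_right_eq_Icc_add_one h, Finset.sum_insert (by simp), add_comm]

lemma hasDerivAt_focalCurve {m : ℕ} (G : GenericCurve m) (c : ℕ → ℝ → ℝ)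
    (hc : ∀ i, 1 ≤ i → i ≤ m → ContDiff ℝ (⊤ : ℕ∞) (c i)) (s : ℝ) :
    HasDerivAt (focalCurve m G c)
      (G.frame 0 s +
        ∑ i ∈ Icc 1 m, (c i s • deriv (G.frame i) s + deriv (c i) s • G.frame i s)) s := by
  have h1 : HasDerivAt G.γ (G.frame 0 s) s := by
    have h := (G.smooth_γ.differentiable (by simp) s).hasDerivAt
    rwa [G.unit_speed] at h
  have h2 : ∀ i ∈ Icc 1 m, HasDerivAt (fun t => c i t • G.frame i t)
      (c i s • deriv (G.frame i) s + deriv (c i) s • G.frame i s) s := by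
    intro i hi
    rw [mem_Icc] at hi
    exact (((hc i hi.1 hi.2).differentiable (by simp) s).hasDerivAt).smul
      (((G.smooth_frame i hi.2).differentiable (by simp) s).hasDerivAt)
  exact h1.add (HasDerivAt.fun_sum h2)

lemma partial_sum {m : ℕ} (G : GenericCurve m) (c : ℕ → ℝ → ℝ)
    (hsf : ScalarFrenet m G c) (k : ℕ) (hk1 : 1 ≤ k) :
    k ≤ m - 1 → ∀ s : ℝ,
    ∑ i ∈ Icc 1 k, (c i s • deriv (G.frame i) s + deriv (c i) s • G.frame i s) =
      -(c 1 s * G.κ 1 s) • G.frame 0 s + (G.κ (k + 1) s * c (k + 1) s) • G.frame k s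
        + (G.κ (k + 1) s * c k s) • G.frame (k + 1) s := by
  induction k, hk1 using Nat.le_induction with
  | base =>
    intro hk s
    rw [Finset.Icc_self, Finset.sum_singleton]
    rw [G.frenet 1 le_rfl (by omega) s, hsf.2.1 s]
    simp only [Nat.sub_self]
    module
  | succ k hk1 ih =>
    intro hk s
    rw [sum_Icc_top (by omega)]
    rw [ih (by omega) s, G.frenet (k + 1) (by omega) (by omega) s,
      hsf.2.2 (k + 1) (by omega) (by omega) s]
    simp only [Nat.add_sub_cancel]
    module

lemma deriv_focalCurve {m : ℕ} (hm2 : 2 ≤ m) (G : GenericCurve m) (c : ℕ → ℝ → ℝ)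
    (hc : ∀ i, 1 ≤ i → i ≤ m → ContDiff ℝ (⊤ : ℕ∞) (c i)) (hsf : ScalarFrenet m G c) (s : ℝ) :
    deriv (focalCurve m G c) s
      = (deriv (c m) s + c (m - 1) s * G.κ m s) • G.frame m s := by
  rw [(hasDerivAt_focalCurve G c hc s).deriv]
  have hm1 : m - 1 + 1 = m := by omega
  have hsplit : ∑ i ∈ Icc 1 m, (c i s • deriv (G.frame i) s + deriv (c i) s • G.frame i s)
      = ∑ i ∈ Icc 1 (m - 1), (c i s • deriv (G.frame i) s + deriv (c i) s • G.frame i s)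
        + (c m s • deriv (G.frame m) s + deriv (c m) s • G.frame m s) := by
    rw [show Icc 1 m = Icc 1 (m - 1 + 1) from by rw [hm1], sum_Icc_top (by omega), hm1]
  rw [hsplit, partial_sum G c hsf (m - 1) (by omega) (le_refl _) s, hm1, G.frenet_last s]
  have h0 : G.κ 1 s * c 1 s = 1 := (hsf.1 s).symm
  match_scalars
  · linear_combination -h0
  · ring
  · ring


/-- If `γ` is a `1`-slant helix with fixed unit direction `U`, then its focal
representation `C_γ` is an `(m+1)`-slant helix: `⟨U, N_m⟩` is constant and
nonzero. -/
theorem focal_of_one_slant_helix (m : ℕ) (hm : 1 ≤ m) (G : GenericCurve m)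
    (c : ℕ → ℝ → ℝ) (hc : ∀ i, 1 ≤ i → i ≤ m → ContDiff ℝ (⊤ : ℕ∞) (c i))
    (hsf : ScalarFrenet m G c)
    (hA : ∀ s, deriv (c m) s + c (m - 1) s * G.κ m s ≠ 0)
    (F : FrenetFrameAlong m (focalCurve m G c))
    (U : EuclideanSpace ℝ (Fin (m + 1))) (hU : ‖U‖ = 1)
    (hslant : ∃ d : ℝ, d ≠ 0 ∧ ∀ s, (inner ℝ U (G.frame 0 s) : ℝ) = d) :
    ∃ d : ℝ, d ≠ 0 ∧ ∀ s, (inner ℝ U (F.N m s) : ℝ) = d := by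
  obtain ⟨d, hd, hds⟩ := hslant
  rcases eq_or_lt_of_le hm with h1 | hm2
  · -- m = 1 : hypotheses are contradictory
    exfalso
    subst h1
    -- d/ds ⟨U, t⟩ = κ₁ ⟨U, n₁⟩ = 0
    have hker : ∀ s : ℝ, (inner ℝ U (G.frame 1 s) : ℝ) = 0 := by
      intro s
      have hder : HasDerivAt (fun t => (inner ℝ U (G.frame 0 t) : ℝ))
          ((inner ℝ U (deriv (G.frame 0) s) : ℝ)) s := by
        have h := (hasDerivAt_const s U).inner ℝ
          ((G.smooth_frame 0 (by omega)).differentiable (by simp) s).hasDerivAt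
        simpa using h
      have hconst : (fun t => (inner ℝ U (G.frame 0 t) : ℝ)) = fun _ => d := funext hds
      have hzero : (inner ℝ U (deriv (G.frame 0) s) : ℝ) = 0 := by
        have := hder.unique (by rw [hconst]; exact hasDerivAt_const s d)
        exact this
      rw [G.frenet_zero s, inner_smul_right] at hzero
      have hκ := (G.κ_pos 1 le_rfl le_rfl s).ne'
      exact (mul_eq_zero.1 hzero).resolve_left hκ
    -- differentiate again: 0 = -κ₁ d ≠ 0
    have hder2 : HasDerivAt (fun t => (inner ℝ U (G.frame 1 t) : ℝ))
        ((inner ℝ U (deriv (G.frame 1) 0) : ℝ)) 0 := by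
      have h := (hasDerivAt_const (0 : ℝ) U).inner ℝ
        ((G.smooth_frame 1 le_rfl).differentiable (by simp) 0).hasDerivAt
      simpa using h
    have hconst2 : (fun t => (inner ℝ U (G.frame 1 t) : ℝ)) = fun _ => (0 : ℝ) := funext hker
    have hzero2 : (inner ℝ U (deriv (G.frame 1) 0) : ℝ) = 0 :=
      hder2.unique (by rw [hconst2]; exact hasDerivAt_const 0 0)
    rw [G.frenet_last 0] at hzero2
    simp only [show (1 : ℕ) - 1 = 0 from rfl, inner_smul_right, hds 0] at hzero2
    have hκ := G.κ_pos 1 le_rfl le_rfl 0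
    rcases mul_eq_zero.1 hzero2 with h | h
    · nlinarith
    · exact hd h
  · -- m ≥ 2
    have hm2' : 2 ≤ m := hm2
    set A : ℝ → ℝ := fun s => deriv (c m) s + c (m - 1) s * G.κ m s with hAdef
    have hAne : ∀ s, A s ≠ 0 := hA
    have hderiv : ∀ s, deriv (focalCurve m G c) s = A s • G.frame m s :=
      fun s => deriv_focalCurve hm2' G c hc hsf s
    have hnormC : ∀ s, ‖deriv (focalCurve m G c) s‖ = |A s| := by
      intro s
      rw [hderiv s, norm_smul, G.frame_norm le_rfl, mul_one, Real.norm_eq_abs]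
    have contA : Continuous A := by
      have h1 : Continuous (deriv (c m)) := (hc m hm le_rfl).continuous_deriv (by simp)
      have h2 : Continuous (c (m - 1)) := (hc (m - 1) (by omega) (by omega)).continuous
      have h3 : Continuous (G.κ m) := (G.smooth_κ m hm le_rfl).continuous
      exact h1.add (h2.mul h3)
    have ivt : ∀ a b : ℝ, A a < 0 → 0 < A b → False := by
      intro a b ha hb
      obtain ⟨t, ht⟩ := intermediate_value_univ a b contA ⟨ha.le, hb.le⟩
      exact hAne t ht
    set ε : ℝ := if 0 < A 0 then 1 else -1 with hεdef
    have hεabs : |ε| = 1 := by rw [hεdef]; split <;> norm_num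
    have hAε : ∀ s, A s = ε * |A s| := by
      intro s
      rcases lt_or_gt_of_ne (hAne s) with hs | hs
      · have h0 : ¬ 0 < A 0 := fun h0 => ivt s 0 hs h0
        rw [hεdef, if_neg h0, abs_of_neg hs]; ring
      · have h0 : 0 < A 0 := by
          by_contra h0
          exact ivt 0 s (lt_of_le_of_ne (not_lt.1 h0) (hAne 0)) hs
        rw [hεdef, if_pos h0, abs_of_pos hs]; ring
    have hAabs : ∀ s, 0 < |A s| := fun s => abs_pos.2 (hAne s)
    -- the frame of the focal curve, compared with that of γ
    have hN0 : ∀ s, F.N 0 s = ε • G.frame m s := by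
      intro s
      have ht := F.tangent s
      rw [hnormC s, hderiv s] at ht
      obtain ⟨-, h2⟩ := unit_vec_eq (hAabs s) (F.N_norm (Nat.zero_le m) s)
        (G.frame_norm le_rfl s) ht.symm
      have hcoef : A s / |A s| = ε := by rw [div_eq_iff (hAabs s).ne']; exact hAε s
      rw [h2, hcoef]
    set e : ℕ → ℝ := fun i => (-1 : ℝ) ^ i * ε with hedef
    have heabs : ∀ i, |e i| = 1 := by
      intro i
      simp only [hedef, abs_mul, abs_pow, abs_neg, abs_one, one_pow, one_mul, hεabs]
    have hene : ∀ i, e i ≠ 0 := by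
      intro i h
      have h2 := heabs i
      rw [h, abs_zero] at h2
      exact one_ne_zero h2.symm
    have hesucc : ∀ i, e (i + 1) = -(e i) := by
      intro i
      simp only [hedef, pow_succ]
      ring
    have hN1 : ∀ s, F.N 1 s = e 1 • G.frame (m - 1) s := by
      intro s
      have hdiff : DifferentiableAt ℝ (G.frame m) s :=
        (G.smooth_frame m le_rfl).differentiable (by simp) s
      have hd0 : deriv (F.N 0) s = ε • deriv (G.frame m) s := by
        have hfun : F.N 0 = fun t => ε • G.frame m t := funext hN0
        rw [hfun, deriv_fun_const_smul _ hdiff]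
      rw [F.frenet_zero s, hnormC s, G.frenet_last s] at hd0
      have heq : (|A s| * F.K 1 s) • F.N 1 s = (ε * -(G.κ m s)) • G.frame (m - 1) s := by
        linear_combination (norm := module) hd0
      have hX : 0 < |A s| * F.K 1 s := mul_pos (hAabs s) (F.K_pos 1 le_rfl hm s)
      obtain ⟨hXa, h2⟩ := unit_vec_eq hX (F.N_norm hm s) (G.frame_norm (by omega) s) heq
      rw [h2]
      congr 1
      have hκpos := G.κ_pos m hm le_rfl s
      have habs : |ε * -(G.κ m s)| = G.κ m s := by
        rw [abs_mul, hεabs, one_mul, abs_neg, abs_of_pos hκpos]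
      rw [hXa, habs, show e 1 = -ε from by simp [hedef]]
      field_simp
    have step : ∀ j, 1 ≤ j → j + 1 ≤ m →
        (∀ s, F.N (j - 1) s = e (j - 1) • G.frame (m - (j - 1)) s) →
        (∀ s, F.N j s = e j • G.frame (m - j) s) →
        ∀ s, F.N (j + 1) s = e (j + 1) • G.frame (m - (j + 1)) s := by
      intro j hj1 hjm hprev hcur s
      have hdiff : DifferentiableAt ℝ (G.frame (m - j)) s :=
        (G.smooth_frame (m - j) (by omega)).differentiable (by simp) s
      have hdj : deriv (F.N j) s = e j • deriv (G.frame (m - j)) s := by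
        have hfun : F.N j = fun t => e j • G.frame (m - j) t := funext hcur
        rw [hfun, deriv_fun_const_smul _ hdiff]
      rw [F.frenet j hj1 (by omega) s, hnormC s, G.frenet (m - j) (by omega) (by omega) s,
        hprev s, show m - (j - 1) = m - j + 1 from by omega] at hdj
      have heq : (|A s| * F.K (j + 1) s) • F.N (j + 1) s
          = (e j * -(G.κ (m - j) s)) • G.frame (m - j - 1) s
            + (e j * G.κ (m - j + 1) s + |A s| * (F.K j s * e (j - 1))) •
                G.frame (m - j + 1) s := by
        linear_combination (norm := module) hdj
      have hb : e j * G.κ (m - j + 1) s + |A s| * (F.K j s * e (j - 1)) = 0 := by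
        have h1 := congrArg
          (fun v : EuclideanSpace ℝ (Fin (m + 1)) => (inner ℝ v (F.N (j - 1) s) : ℝ)) heq
        simp only [inner_add_left, real_inner_smul_left] at h1
        rw [F.orthonormal s (j + 1) (by omega) (j - 1) (by omega), if_neg (by omega),
          hprev s, show m - (j - 1) = m - j + 1 from by omega] at h1
        simp only [real_inner_smul_right] at h1
        rw [G.orthonormal s (m - j - 1) (by omega) (m - j + 1) (by omega), if_neg (by omega),
          G.orthonormal s (m - j + 1) (by omega) (m - j + 1) (by omega), if_pos rfl] at h1
        simp only [mul_zero, mul_one, zero_add] at h1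
        rcases mul_eq_zero.1 h1.symm with h | h
        · exact h
        · exact absurd h (hene (j - 1))
      rw [hb, zero_smul, add_zero] at heq
      have hX : 0 < |A s| * F.K (j + 1) s :=
        mul_pos (hAabs s) (F.K_pos (j + 1) (by omega) (by omega) s)
      obtain ⟨hXa, h2⟩ := unit_vec_eq hX (F.N_norm (by omega) s) (G.frame_norm (by omega) s) heq
      rw [show m - j - 1 = m - (j + 1) from by omega] at h2
      rw [h2]
      congr 1
      have hκpos := G.κ_pos (m - j) (by omega) (by omega) s
      have habs : |e j * -(G.κ (m - j) s)| = G.κ (m - j) s := by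
        rw [abs_mul, heabs, one_mul, abs_neg, abs_of_pos hκpos]
      rw [hXa, habs, hesucc j]
      field_simp
    have key : ∀ i, i + 1 ≤ m →
        (∀ s, F.N i s = e i • G.frame (m - i) s) ∧
        (∀ s, F.N (i + 1) s = e (i + 1) • G.frame (m - (i + 1)) s) := by
      intro i
      induction i with
      | zero =>
        intro _
        refine ⟨fun s => ?_, fun s => ?_⟩
        · rw [show e 0 = ε from by simp [hedef], Nat.sub_zero]
          exact hN0 s
        · exact hN1 s
      | succ i ih =>
        intro h2
        obtain ⟨hp, hc'⟩ := ih (by omega)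
        exact ⟨hc', step (i + 1) (by omega) h2
          (by intro s; rw [show i + 1 - 1 = i from rfl]; exact hp s) hc'⟩
    have hkey := (key (m - 1) (by omega)).2
    rw [show m - 1 + 1 = m from by omega] at hkey
    refine ⟨e m * d, mul_ne_zero (hene m) hd, fun s => ?_⟩
    rw [hkey s, Nat.sub_self, real_inner_smul_right, hds s]


end
end

section
/- Let γ be a unit-speed generic curve in ℝ^{m+1} with focal curve C_γ whose focal curvatures satisfy the scalar Frenet equations, assume A := c_m' + c_{m−1}κ_m is nowhere zero, and let {T, N₁, …, N_m} be a Frenet frame of C_γ with positive Frenet curvatures. If γ is an (m+1)-slant helix with fixed unit direction U (i.e. ⟨U, n_m(s)⟩ is constant and nonzero), then the focal representation C_γ is a 1-slant helix in ℝ^{m+1}: ⟨U, T(s)⟩ is constant and nonzero. -/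
open Finset

noncomputable section

/-- If `γ` is an `(m+1)`-slant helix with fixed unit direction `U`, then its
focal representation `C_γ` is a `1`-slant helix: `⟨U, T⟩` is constant and
nonzero. -/
theorem focal_of_top_slant_helix (m : ℕ) (hm : 1 ≤ m) (G : GenericCurve m)
    (c : ℕ → ℝ → ℝ) (hc : ∀ i, 1 ≤ i → i ≤ m → ContDiff ℝ (⊤ : ℕ∞) (c i))
    (hsf : ScalarFrenet m G c)
    (hA : ∀ s, deriv (c m) s + c (m - 1) s * G.κ m s ≠ 0)
    (F : FrenetFrameAlong m (focalCurve m G c))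
    (U : EuclideanSpace ℝ (Fin (m + 1))) (hU : ‖U‖ = 1)
    (hslant : ∃ d : ℝ, d ≠ 0 ∧ ∀ s, (inner ℝ U (G.frame m s) : ℝ) = d) :
    ∃ d : ℝ, d ≠ 0 ∧ ∀ s, (inner ℝ U (F.N 0 s) : ℝ) = d := by
  classical
  obtain ⟨d, hd, hdU⟩ := hslant
  have hfrD : ∀ i, i ≤ m → ∀ s : ℝ, HasDerivAt (G.frame i) (deriv (G.frame i) s) s :=
    fun i hi s => ((G.smooth_frame i hi).differentiable (by simp) s).hasDerivAt
  have hcD : ∀ i, 1 ≤ i → i ≤ m → ∀ s : ℝ, HasDerivAt (c i) (deriv (c i) s) s :=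
    fun i h1 h2 s => ((hc i h1 h2).differentiable (by simp) s).hasDerivAt
  rcases eq_or_lt_of_le hm with hm1 | hm2
  · -- m = 1 : the slant hypothesis is contradictory
    exfalso
    subst hm1
    have hκ := G.κ_pos 1 le_rfl le_rfl
    have hT : ∀ s : ℝ, (inner ℝ U (G.frame 0 s) : ℝ) = 0 := by
      intro s
      have hder : HasDerivAt (fun t => (inner ℝ U (G.frame 1 t) : ℝ))
          (inner ℝ U (deriv (G.frame 1) s) + (inner ℝ (0 : EuclideanSpace ℝ (Fin 2)) (G.frame 1 s) : ℝ)) s :=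
        (hasDerivAt_const s U).inner ℝ (hfrD 1 le_rfl s)
      have hconst : HasDerivAt (fun t => (inner ℝ U (G.frame 1 t) : ℝ)) 0 s := by
        have heq : (fun t => (inner ℝ U (G.frame 1 t) : ℝ)) = fun _ => d := funext hdU
        rw [heq]; exact hasDerivAt_const s d
      have h0 := hder.unique hconst
      rw [G.frenet_last s] at h0
      simp only [Nat.sub_self, inner_zero_left, add_zero, inner_smul_right] at h0
      have := hκ s
      nlinarith [h0]
    have hder2 : HasDerivAt (fun t => (inner ℝ U (G.frame 0 t) : ℝ))
        (inner ℝ U (deriv (G.frame 0) 0) + (inner ℝ (0 : EuclideanSpace ℝ (Fin 2)) (G.frame 0 0) : ℝ)) 0 :=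
      (hasDerivAt_const 0 U).inner ℝ (hfrD 0 (by omega) 0)
    have hconst2 : HasDerivAt (fun t => (inner ℝ U (G.frame 0 t) : ℝ)) 0 0 := by
      have heq : (fun t => (inner ℝ U (G.frame 0 t) : ℝ)) = fun _ => (0 : ℝ) := funext hT
      rw [heq]; exact hasDerivAt_const 0 0
    have h0 := hder2.unique hconst2
    rw [G.frenet_zero 0] at h0
    simp only [inner_zero_left, add_zero, inner_smul_right, hdU 0] at h0
    rcases mul_eq_zero.mp h0 with h | h
    · exact absurd h (ne_of_gt (hκ 0))
    · exact hd h
  · -- m ≥ 2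
    have hCder : ∀ s : ℝ, HasDerivAt (focalCurve m G c)
        (G.frame 0 s + ∑ i ∈ Icc 1 m, (c i s • deriv (G.frame i) s + deriv (c i) s • G.frame i s)) s := by
      intro s
      have hγ : HasDerivAt G.γ (G.frame 0 s) s := by
        have h := ((G.smooth_γ.differentiable (by simp)) s).hasDerivAt
        rwa [G.unit_speed s] at h
      have hsum : HasDerivAt (fun t => ∑ i ∈ Icc 1 m, c i t • G.frame i t)
          (∑ i ∈ Icc 1 m, (c i s • deriv (G.frame i) s + deriv (c i) s • G.frame i s)) s := by
        refine HasDerivAt.fun_sum fun i hi => ?_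
        obtain ⟨h1, h2⟩ := Finset.mem_Icc.mp hi
        exact (hcD i h1 h2 s).smul (hfrD i h2 s)
      exact hγ.add hsum
    have claim : ∀ n, 1 ≤ n → n ≤ m - 1 → ∀ s : ℝ,
        G.frame 0 s + ∑ i ∈ Icc 1 n, (c i s • deriv (G.frame i) s + deriv (c i) s • G.frame i s)
          = (G.κ (n+1) s * c (n+1) s) • G.frame n s + (G.κ (n+1) s * c n s) • G.frame (n+1) s := by
      intro n
      induction n with
      | zero => omega
      | succ k ih =>
        intro h1 h2 s
        rcases Nat.eq_zero_or_pos k with rfl | hk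
        · have hfr := G.frenet 1 le_rfl (by omega) s
          norm_num at hfr
          have hsf1 := hsf.1 s
          have hsf2 := hsf.2.1 s
          norm_num [Finset.Icc_self, Finset.sum_singleton]
          rw [hfr, hsf2]
          match_scalars
          · linear_combination hsf1
          · ring
          · ring
        · have hfr := G.frenet (k+1) (by omega) h2 s
          have hsfk := hsf.2.2 (k+1) (by omega) h2 s
          have ihs := ih (by omega) (by omega) s
          rw [Finset.sum_Icc_succ_top (by omega : 1 ≤ k+1), ← add_assoc, ihs, hfr, hsfk]
          simp only [Nat.add_sub_cancel]
          match_scalars <;> ring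
    obtain ⟨m', rfl⟩ : ∃ m', m = m' + 1 := ⟨m - 1, by omega⟩
    have hm' : 1 ≤ m' := by omega
    have key : ∀ s : ℝ, deriv (focalCurve (m'+1) G c) s
        = (deriv (c (m'+1)) s + c m' s * G.κ (m'+1) s) • G.frame (m'+1) s := by
      intro s
      rw [(hCder s).deriv, Finset.sum_Icc_succ_top (by omega : 1 ≤ m'+1), ← add_assoc,
        claim m' hm' (by omega) s, G.frenet_last s]
      simp only [Nat.add_sub_cancel]
      match_scalars <;> ring
    set A : ℝ → ℝ := fun s => deriv (c (m'+1)) s + c m' s * G.κ (m'+1) s with hAdef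
    have hA' : ∀ s, A s ≠ 0 := by
      intro s
      have := hA s
      simpa only [Nat.add_sub_cancel, hAdef] using this
    have hnorm : ∀ s : ℝ, ‖G.frame (m'+1) s‖ = 1 := by
      intro s
      have h := G.orthonormal s (m'+1) le_rfl (m'+1) le_rfl
      rw [if_pos rfl] at h
      rw [norm_eq_sqrt_real_inner, h, Real.sqrt_one]
    have hnormC : ∀ s : ℝ, ‖deriv (focalCurve (m'+1) G c) s‖ = |A s| := by
      intro s
      rw [key s, norm_smul, hnorm, Real.norm_eq_abs, mul_one]
    have hAcont : Continuous A := by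
      have h1 : Continuous (deriv (c (m'+1))) := (hc (m'+1) (by omega) le_rfl).continuous_deriv (by simp)
      have h2 : Continuous (c m') := (hc m' hm' (by omega)).continuous
      have h3 : Continuous (G.κ (m'+1)) := (G.smooth_κ (m'+1) (by omega) le_rfl).continuous
      exact h1.add (h2.mul h3)
    have hsign : (∀ s, 0 < A s) ∨ (∀ s, A s < 0) := by
      rcases (hA' 0).lt_or_gt with h0 | h0
      · right
        intro s
        by_contra hs
        push_neg at hs
        have h0s : 0 < A s := lt_of_le_of_ne hs (Ne.symm (hA' s))
        have hmem : (0:ℝ) ∈ Set.Icc (A 0) (A s) := ⟨le_of_lt h0, le_of_lt h0s⟩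
        obtain ⟨u, hu⟩ := intermediate_value_univ 0 s hAcont hmem
        exact hA' u hu
      · left
        intro s
        by_contra hs
        push_neg at hs
        have h0s : A s < 0 := lt_of_le_of_ne hs (hA' s)
        have hmem : (0:ℝ) ∈ Set.Icc (A s) (A 0) := ⟨le_of_lt h0s, le_of_lt h0⟩
        obtain ⟨u, hu⟩ := intermediate_value_univ s 0 hAcont hmem
        exact hA' u hu
    rcases hsign with hpos | hneg
    · refine ⟨d, hd, fun s => ?_⟩
      have htan := F.tangent s
      rw [hnormC s, key s, abs_of_pos (hpos s)] at htan
      have heq : G.frame (m'+1) s = F.N 0 s :=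
        smul_right_injective _ (ne_of_gt (hpos s)) htan
      rw [← heq]
      exact hdU s
    · refine ⟨-d, neg_ne_zero.mpr hd, fun s => ?_⟩
      have htan := F.tangent s
      rw [hnormC s, key s, abs_of_neg (hneg s)] at htan
      have htan2 : A s • G.frame (m'+1) s = A s • (-(F.N 0 s)) := by
        rw [htan, neg_smul, smul_neg]
      have heq : G.frame (m'+1) s = -(F.N 0 s) :=
        smul_right_injective _ (ne_of_lt (hneg s)) htan2
      have h3 : (inner ℝ U (-(F.N 0 s)) : ℝ) = d := by rw [← heq]; exact hdU s
      rw [inner_neg_right] at h3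
      linarith

end
end

section
/- Let γ be a unit-speed generic curve in ℝ^{m+1} with focal curve C_γ whose focal curvatures satisfy the scalar Frenet equations, assume A := c_m' + c_{m−1}κ_m is nowhere zero, and let {T, N₁, …, N_m} be a Frenet frame of C_γ with positive Frenet curvatures. Let 2 ≤ k ≤ m. If γ is a k-slant helix with fixed unit direction U (i.e. ⟨U, n_{k−1}(s)⟩ is constant and nonzero), then the focal representation C_γ is an (m−k+2)-slant helix in ℝ^{m+1}: ⟨U, N_{m−k+1}(s)⟩ is constant and nonzero. -/
open Finset

noncomputable section

lemma aux_sign_const {σ : ℝ → ℝ} (hσ : Continuous σ) (h : ∀ s, σ s * σ s = 1)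
    (s t : ℝ) : σ s = σ t := by
  rcases mul_self_eq_one_iff.mp (h s) with hs | hs <;>
    rcases mul_self_eq_one_iff.mp (h t) with ht | ht
  · rw [hs, ht]
  · exfalso
    obtain ⟨u, hu⟩ := intermediate_value_univ t s hσ
      (show (0:ℝ) ∈ Set.Icc (σ t) (σ s) by rw [hs, ht]; norm_num)
    have := h u; rw [hu] at this; norm_num at this
  · exfalso
    obtain ⟨u, hu⟩ := intermediate_value_univ s t hσ
      (show (0:ℝ) ∈ Set.Icc (σ s) (σ t) by rw [hs, ht]; norm_num)
    have := h u; rw [hu] at this; norm_num at this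
  · rw [hs, ht]

lemma aux_unit_parallel {E : Type*} [NormedAddCommGroup E] [InnerProductSpace ℝ E]
    {N n : ℝ → E} (hNc : Continuous N) (hnc : Continuous n)
    (hNu : ∀ s, ‖N s‖ = 1) (hnu : ∀ s, ‖n s‖ = 1)
    (hpar : ∀ s, ∃ a : ℝ, N s = a • n s) :
    ∃ ε : ℝ, ε * ε = 1 ∧ ∀ s, N s = ε • n s := by
  set σ : ℝ → ℝ := fun s => (inner ℝ (n s) (N s) : ℝ) with hσdef
  have hσcont : Continuous σ := hnc.inner hNc
  have hNσ : ∀ s, N s = σ s • n s := by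
    intro s
    obtain ⟨a, ha⟩ := hpar s
    have hσa : σ s = a := by
      rw [hσdef]
      simp only [ha, real_inner_smul_right, real_inner_self_eq_norm_mul_norm, hnu s]
      ring
    rw [ha, hσa]
  have habs : ∀ s, |σ s| = 1 := by
    intro s
    have h1 : ‖N s‖ = ‖σ s • n s‖ := by rw [← hNσ s]
    rw [norm_smul, hnu s, mul_one, Real.norm_eq_abs, hNu s] at h1
    exact h1.symm
  have hσ2 : ∀ s, σ s * σ s = 1 := fun s => by
    rw [← abs_mul_abs_self, habs s, one_mul]
  exact ⟨σ 0, hσ2 0, fun s => by rw [hNσ s, aux_sign_const hσcont hσ2 s 0]⟩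

/-- If `γ` is a `k`-slant helix (`2 ≤ k ≤ m`) with fixed unit direction `U`,
then its focal representation `C_γ` is an `(m−k+2)`-slant helix:
`⟨U, N_{m−k+1}⟩` is constant and nonzero. -/
theorem focal_of_k_slant_helix (m : ℕ) (hm : 1 ≤ m) (G : GenericCurve m)
    (c : ℕ → ℝ → ℝ) (hc : ∀ i, 1 ≤ i → i ≤ m → ContDiff ℝ (⊤ : ℕ∞) (c i))
    (hsf : ScalarFrenet m G c)
    (hA : ∀ s, deriv (c m) s + c (m - 1) s * G.κ m s ≠ 0)
    (F : FrenetFrameAlong m (focalCurve m G c))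
    (k : ℕ) (hk2 : 2 ≤ k) (hkm : k ≤ m)
    (U : EuclideanSpace ℝ (Fin (m + 1))) (hU : ‖U‖ = 1)
    (hslant : ∃ d : ℝ, d ≠ 0 ∧ ∀ s, (inner ℝ U (G.frame (k - 1) s) : ℝ) = d) :
    ∃ d : ℝ, d ≠ 0 ∧ ∀ s, (inner ℝ U (F.N (m - k + 1) s) : ℝ) = d := by
  classical
  obtain ⟨d, hd, hdU⟩ := hslant
  have hm2 : 2 ≤ m := le_trans hk2 hkm
  -- basic helpers
  have hcontn : ∀ i, i ≤ m → Continuous (G.frame i) :=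
    fun i hi => (G.smooth_frame i hi).continuous
  have hcontN : ∀ i, i ≤ m → Continuous (F.N i) :=
    fun i hi => (F.smooth_N i hi).continuous
  have hdn : ∀ i, i ≤ m → ∀ s, DifferentiableAt ℝ (G.frame i) s :=
    fun i hi s => (G.smooth_frame i hi).differentiable (by simp) s
  have hdc : ∀ i, 1 ≤ i → i ≤ m → ∀ s, DifferentiableAt ℝ (c i) s :=
    fun i h1 h2 s => (hc i h1 h2).differentiable (by simp) s
  have hunit : ∀ i, i ≤ m → ∀ s, ‖G.frame i s‖ = 1 := by
    intro i hi s
    have h := G.orthonormal s i hi i hi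
    rw [if_pos rfl, real_inner_self_eq_norm_mul_norm] at h
    rcases mul_self_eq_one_iff.mp h with h' | h'
    · exact h'
    · nlinarith [norm_nonneg (G.frame i s)]
  have hNunit : ∀ i, i ≤ m → ∀ s, ‖F.N i s‖ = 1 := by
    intro i hi s
    have h := F.orthonormal s i hi i hi
    rw [if_pos rfl, real_inner_self_eq_norm_mul_norm] at h
    rcases mul_self_eq_one_iff.mp h with h' | h'
    · exact h'
    · nlinarith [norm_nonneg (F.N i s)]
  -- derivative of the partial sums
  have hT : ∀ s : ℝ, ∀ j, 1 ≤ j → j ≤ m →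
      HasDerivAt (fun u => ∑ i ∈ Finset.Icc 1 j, c i u • G.frame i u)
        (∑ i ∈ Finset.Icc 1 j, (c i s • deriv (G.frame i) s + deriv (c i) s • G.frame i s)) s := by
    intro s j h1 hj
    apply HasDerivAt.fun_sum
    intro i hi
    simp only [Finset.mem_Icc] at hi
    exact ((hdc i hi.1 (hi.2.trans hj) s).hasDerivAt).smul ((hdn i (hi.2.trans hj) s).hasDerivAt)
  -- telescoping identity for the partial sums
  have hTel : ∀ j, 1 ≤ j → j ≤ m - 1 → ∀ s : ℝ,
      (∑ i ∈ Finset.Icc 1 j, (c i s • deriv (G.frame i) s + deriv (c i) s • G.frame i s))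
        = -(G.frame 0 s)
          + G.κ (j+1) s • (c (j+1) s • G.frame j s + c j s • G.frame (j+1) s) := by
    intro j hj1
    induction j, hj1 using Nat.le_induction with
    | base =>
      intro hjm s
      rw [Finset.Icc_self, Finset.sum_singleton]
      have h11 := hsf.1 s
      have hd1 := G.frenet 1 le_rfl (by omega) s
      have hc1 := hsf.2.1 s
      simp only [show (1:ℕ) - 1 = 0 from rfl, show (1:ℕ) + 1 = 2 from rfl] at hd1 ⊢
      rw [hd1, hc1]
      match_scalars
      · linear_combination h11
      · ring
      · ring
    | succ j hj ih =>
      intro hjm s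
      rw [Finset.sum_Icc_succ_top (by omega : 1 ≤ j + 1), ih (by omega) s]
      have hdj := G.frenet (j+1) (by omega) (by omega) s
      have hcj := hsf.2.2 (j+1) (by omega) (by omega) s
      simp only [Nat.add_sub_cancel] at hdj hcj
      rw [hdj, hcj]
      module
  -- the derivative of the focal curve
  have hderivC : ∀ s, deriv (focalCurve m G c) s
      = (deriv (c m) s + c (m - 1) s * G.κ m s) • G.frame m s := by
    obtain ⟨j, hj⟩ : ∃ j, m = j + 1 := ⟨m - 1, by omega⟩
    have h1j : 1 ≤ j := by omega
    subst hj
    intro s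
    have hγ : HasDerivAt G.γ (G.frame 0 s) s := by
      have h := ((G.smooth_γ.differentiable (by simp)) s).hasDerivAt
      rwa [G.unit_speed s] at h
    have hC : HasDerivAt (focalCurve (j+1) G c)
        (G.frame 0 s + ∑ i ∈ Finset.Icc 1 (j+1),
          (c i s • deriv (G.frame i) s + deriv (c i) s • G.frame i s)) s :=
      hγ.add (hT s (j+1) (by omega) le_rfl)
    rw [hC.deriv, Finset.sum_Icc_succ_top (by omega : 1 ≤ j + 1),
      hTel j h1j (by omega) s]
    have hlast : deriv (G.frame (j+1)) s = -G.κ (j+1) s • G.frame j s := by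
      have h := G.frenet_last s
      simpa only [Nat.add_sub_cancel] using h
    rw [hlast]
    simp only [Nat.add_sub_cancel]
    module
  have hnormC : ∀ s, ‖deriv (focalCurve m G c) s‖
      = |deriv (c m) s + c (m - 1) s * G.κ m s| := by
    intro s
    rw [hderivC s, norm_smul, hunit m le_rfl s, mul_one, Real.norm_eq_abs]
  -- base case 0 : N 0 = ± frame m
  have P0 : ∃ ε : ℝ, ε * ε = 1 ∧ ∀ s, F.N 0 s = ε • G.frame m s := by
    apply aux_unit_parallel (hcontN 0 (by omega)) (hcontn m le_rfl)
      (hNunit 0 (by omega)) (hunit m le_rfl)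
    intro s
    have ht := F.tangent s
    rw [hnormC s, hderivC s] at ht
    have habs : |deriv (c m) s + c (m - 1) s * G.κ m s| ≠ 0 :=
      abs_ne_zero.mpr (hA s)
    refine ⟨|deriv (c m) s + c (m - 1) s * G.κ m s|⁻¹
      * (deriv (c m) s + c (m - 1) s * G.κ m s), ?_⟩
    rw [← smul_smul, ht, smul_smul, inv_mul_cancel₀ habs, one_smul]
  -- base case 1 : N 1 = ± frame (m-1)
  have P1 : ∃ ε : ℝ, ε * ε = 1 ∧ ∀ s, F.N 1 s = ε • G.frame (m-1) s := by
    obtain ⟨ε0, hε0, hN0⟩ := P0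
    apply aux_unit_parallel (hcontN 1 (by omega)) (hcontn (m-1) (by omega))
      (hNunit 1 (by omega)) (hunit (m-1) (by omega))
    intro s
    have hfun : F.N 0 = fun u => ε0 • G.frame m u := funext hN0
    have h2 : deriv (F.N 0) s = ε0 • (-G.κ m s • G.frame (m-1) s) := by
      rw [hfun, deriv_fun_const_smul ε0 (hdn m le_rfl s), G.frenet_last s]
    have key : (‖deriv (focalCurve m G c) s‖ * F.K 1 s) • F.N 1 s
        = (ε0 * -(G.κ m s)) • G.frame (m-1) s := by
      rw [← F.frenet_zero s, h2]; module
    have hrne : ‖deriv (focalCurve m G c) s‖ * F.K 1 s ≠ 0 := by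
      rw [hnormC s]
      exact mul_ne_zero (abs_ne_zero.mpr (hA s)) (ne_of_gt (F.K_pos 1 le_rfl hm s))
    refine ⟨(‖deriv (focalCurve m G c) s‖ * F.K 1 s)⁻¹ * (ε0 * -(G.κ m s)), ?_⟩
    rw [← smul_smul, ← key, smul_smul, inv_mul_cancel₀ hrne, one_smul]
  -- induction step
  have step : ∀ α, 1 ≤ α → α + 2 ≤ m →
      (∃ ε : ℝ, ε * ε = 1 ∧ ∀ s, F.N (α-1) s = ε • G.frame (m-(α-1)) s) →
      (∃ ε : ℝ, ε * ε = 1 ∧ ∀ s, F.N α s = ε • G.frame (m-α) s) →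
      (∃ ε : ℝ, ε * ε = 1 ∧ ∀ s, F.N (α+1) s = ε • G.frame (m-(α+1)) s) := by
    rintro α hα1 hαm ⟨ε', hε', hN'⟩ ⟨ε, hε, hNα⟩
    apply aux_unit_parallel (hcontN (α+1) (by omega)) (hcontn (m-(α+1)) (by omega))
      (hNunit (α+1) (by omega)) (hunit (m-(α+1)) (by omega))
    intro s
    set β := m - α with hβ
    have hβ1 : m - (α-1) = β + 1 := by omega
    have hN'' : ∀ u, F.N (α-1) u = ε' • G.frame (β+1) u := by
      intro u
      rw [hN' u, hβ1]
    have e1 := F.frenet α hα1 (by omega) s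
    have e2 : deriv (F.N α) s
        = ε • (-G.κ β s • G.frame (β-1) s + G.κ (β+1) s • G.frame (β+1) s) := by
      have hfun : F.N α = fun u => ε • G.frame β u := funext hNα
      rw [hfun, deriv_fun_const_smul ε (hdn β (by omega) s), G.frenet β (by omega) (by omega) s]
    set w := ‖deriv (focalCurve m G c) s‖ with hw
    have key : w • (-F.K α s • F.N (α-1) s + F.K (α+1) s • F.N (α+1) s)
        = ε • (-G.κ β s • G.frame (β-1) s + G.κ (β+1) s • G.frame (β+1) s) :=
      e1.symm.trans e2
    have hwK : w * F.K (α+1) s ≠ 0 := by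
      rw [hw, hnormC s]
      exact mul_ne_zero (abs_ne_zero.mpr (hA s))
        (ne_of_gt (F.K_pos (α+1) (by omega) (by omega) s))
    have h4 : (w * F.K (α+1) s) • F.N (α+1) s
        = w • (-F.K α s • F.N (α-1) s + F.K (α+1) s • F.N (α+1) s)
          + (w * F.K α s) • F.N (α-1) s := by module
    have hdecomp : (w * F.K (α+1) s) • F.N (α+1) s
        = (ε * -(G.κ β s)) • G.frame (β-1) s
          + (ε * G.κ (β+1) s + w * F.K α s * ε') • G.frame (β+1) s := by
      rw [h4, key, hN'' s]; module
    have o1 : (inner ℝ (G.frame (β+1) s) (G.frame (β-1) s) : ℝ) = 0 := by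
      rw [G.orthonormal s (β+1) (by omega) (β-1) (by omega), if_neg (by omega)]
    have o2 : (inner ℝ (G.frame (β+1) s) (G.frame (β+1) s) : ℝ) = 1 := by
      rw [G.orthonormal s (β+1) (by omega) (β+1) (by omega), if_pos rfl]
    have hnN : G.frame (β+1) s = ε' • F.N (α-1) s := by
      rw [hN'' s, smul_smul, hε', one_smul]
    have hq0 : (inner ℝ (G.frame (β+1) s) (F.N (α+1) s) : ℝ) = 0 := by
      rw [hnN, real_inner_smul_left,
        F.orthonormal s (α-1) (by omega) (α+1) (by omega), if_neg (by omega), mul_zero]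
    have h0 := congrArg
      (fun v : EuclideanSpace ℝ (Fin (m + 1)) => (inner ℝ (G.frame (β+1) s) v : ℝ)) hdecomp
    simp only [inner_add_right, real_inner_smul_right, o1, o2, hq0,
      mul_zero, mul_one, zero_add, add_zero] at h0
    have hq : ε * G.κ (β+1) s + w * F.K α s * ε' = 0 := by linarith [h0]
    have hfin : (w * F.K (α+1) s) • F.N (α+1) s = (ε * -(G.κ β s)) • G.frame (β-1) s := by
      rw [hdecomp, hq, zero_smul, add_zero]
    refine ⟨(w * F.K (α+1) s)⁻¹ * (ε * -(G.κ β s)), ?_⟩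
    rw [(by omega : m - (α+1) = β - 1), ← smul_smul, ← hfin, smul_smul,
      inv_mul_cancel₀ hwK, one_smul]
  -- the main induction
  have main : ∀ α, 1 ≤ α → α ≤ m - 1 →
      ((∃ ε : ℝ, ε * ε = 1 ∧ ∀ s, F.N (α-1) s = ε • G.frame (m-(α-1)) s) ∧
       (∃ ε : ℝ, ε * ε = 1 ∧ ∀ s, F.N α s = ε • G.frame (m-α) s)) := by
    intro α hα1
    induction α, hα1 using Nat.le_induction with
    | base =>
      intro _
      exact ⟨P0, P1⟩
    | succ α hα ih =>
      intro hαm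
      obtain ⟨h1, h2⟩ := ih (by omega)
      exact ⟨h2, step α hα (by omega) h1 h2⟩
  -- conclusion
  obtain ⟨ε, hε2, hNs⟩ := (main (m-k+1) (by omega) (by omega)).2
  have hidx : m - (m-k+1) = k-1 := by omega
  have hεne : ε ≠ 0 := by
    intro h; rw [h] at hε2; norm_num at hε2
  refine ⟨ε * d, mul_ne_zero hεne hd, fun s => ?_⟩
  rw [hNs s, hidx, real_inner_smul_right, hdU s]


end
end
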